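/- If an LTL formula φ in negation normal form is Release-free, then φ is co-safe: every infinite trace satisfying φ has a finite good prefix. -/
import Mathlib


/-- LTL formulas in negation normal form over atoms `P`. -/
inductive LTL (P : Type) : Type where
  | tt : LTL P
  | ff : LTL P
  | pos : P → LTL P
  | neg : P → LTL P
  | and : LTL P → LTL P → LTL P
  | or : LTL P → LTL P → LTL P
  | next : LTL P → LTL P
  | until_ : LTL P → LTL P → LTL P
  | release : LTL P → LTL P → LTL P

/-- Satisfaction of an LTL formula by an infinite trace at position `i`. -/
def sat {P : Type} (ρ : ℕ → Set P) : LTL P → ℕ → Prop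
  | .tt, _ => True
  | .ff, _ => False
  | .pos p, i => p ∈ ρ i
  | .neg p, i => p ∉ ρ i
  | .and f g, i => sat ρ f i ∧ sat ρ g i
  | .or f g, i => sat ρ f i ∨ sat ρ g i
  | .next f, i => sat ρ f (i + 1)
  | .until_ f g, i => ∃ j, i ≤ j ∧ sat ρ g j ∧ ∀ k, i ≤ k → k < j → sat ρ f k
  | .release f g, i => ∀ j, i ≤ j → sat ρ g j ∨ ∃ k, i ≤ k ∧ k < j ∧ sat ρ f k

/-- `ρ ⊨ φ`. -/
def Models {P : Type} (ρ : ℕ → Set P) (φ : LTL P) : Prop := sat ρ φ 0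

/-- Concatenation of a finite word with an infinite word. -/
def ext {A : Type} (x : List A) (y : ℕ → A) : ℕ → A :=
  fun n => if h : n < x.length then x.get ⟨n, h⟩ else y (n - x.length)

/-- The length-`n` prefix of an infinite word, as a finite word. -/
def prefList {A : Type} (ρ : ℕ → A) (n : ℕ) : List A :=
  List.ofFn (fun i : Fin n => ρ i.val)

/-- `x` is a bad prefix for `φ`: every infinite extension violates `φ`. -/
def BadPrefix {P : Type} (x : List (Set P)) (φ : LTL P) : Prop :=
  ∀ y : ℕ → Set P, ¬ Models (ext x y) φ

/-- `x` is a good prefix for `φ`: every infinite extension satisfies `φ`. -/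
def GoodPrefix {P : Type} (x : List (Set P)) (φ : LTL P) : Prop :=
  ∀ y : ℕ → Set P, Models (ext x y) φ

/-- `φ` is safe: every violating trace has a bad prefix. -/
def Safe {P : Type} (φ : LTL P) : Prop :=
  ∀ ρ : ℕ → Set P, ¬ Models ρ φ → ∃ n, BadPrefix (prefList ρ n) φ

/-- `φ` is co-safe: every satisfying trace has a good prefix. -/
def CoSafe {P : Type} (φ : LTL P) : Prop :=
  ∀ ρ : ℕ → Set P, Models ρ φ → ∃ n, GoodPrefix (prefList ρ n) φ

/-- An NNF formula is Release-free if it contains no Release operator. -/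
def ReleaseFree {P : Type} : LTL P → Prop
  | .tt => True
  | .ff => True
  | .pos _ => True
  | .neg _ => True
  | .and f g => ReleaseFree f ∧ ReleaseFree g
  | .or f g => ReleaseFree f ∧ ReleaseFree g
  | .next f => ReleaseFree f
  | .until_ f g => ReleaseFree f ∧ ReleaseFree g
  | .release _ _ => False

/-- Key lemma: satisfaction of a release-free formula depends only on a finite
prefix of the trace. -/
theorem releaseFree_finite_dep {P : Type} (φ : LTL P) (h : ReleaseFree φ) :
    ∀ (ρ : ℕ → Set P) (i : ℕ), sat ρ φ i →
      ∃ n, ∀ σ : ℕ → Set P, (∀ k, k < n → σ k = ρ k) → sat σ φ i := by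
  induction φ with
  | tt => intro ρ i _; exact ⟨0, fun _ _ => trivial⟩
  | ff => intro ρ i hs; exact absurd hs not_false
  | pos p =>
    intro ρ i hs
    exact ⟨i + 1, fun σ hσ => by simpa [sat, hσ i (Nat.lt_succ_self i)] using hs⟩
  | neg p =>
    intro ρ i hs
    exact ⟨i + 1, fun σ hσ => by simpa [sat, hσ i (Nat.lt_succ_self i)] using hs⟩
  | and f g ihf ihg =>
    intro ρ i hs
    obtain ⟨nf, hnf⟩ := ihf h.1 ρ i hs.1
    obtain ⟨ng, hng⟩ := ihg h.2 ρ i hs.2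
    exact ⟨max nf ng, fun σ hσ =>
      ⟨hnf σ (fun k hk => hσ k (lt_of_lt_of_le hk (le_max_left _ _))),
       hng σ (fun k hk => hσ k (lt_of_lt_of_le hk (le_max_right _ _)))⟩⟩
  | or f g ihf ihg =>
    intro ρ i hs
    cases hs with
    | inl hs =>
      obtain ⟨nf, hnf⟩ := ihf h.1 ρ i hs
      exact ⟨nf, fun σ hσ => Or.inl (hnf σ hσ)⟩
    | inr hs =>
      obtain ⟨ng, hng⟩ := ihg h.2 ρ i hs
      exact ⟨ng, fun σ hσ => Or.inr (hng σ hσ)⟩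
  | next f ihf =>
    intro ρ i hs
    obtain ⟨n, hn⟩ := ihf h ρ (i + 1) hs
    exact ⟨n, fun σ hσ => hn σ hσ⟩
  | until_ f g ihf ihg =>
    intro ρ i hs
    obtain ⟨j, hij, hgj, hfk⟩ := hs
    obtain ⟨ng, hng⟩ := ihg h.2 ρ j hgj
    have hF : ∀ k, ∃ n, i ≤ k → k < j →
        ∀ σ : ℕ → Set P, (∀ m, m < n → σ m = ρ m) → sat σ f k := by
      intro k
      by_cases hk : i ≤ k ∧ k < j
      · obtain ⟨n, hn⟩ := ihf h.1 ρ k (hfk k hk.1 hk.2)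
        exact ⟨n, fun _ _ => hn⟩
      · exact ⟨0, fun h1 h2 => absurd ⟨h1, h2⟩ hk⟩
    choose F hFspec using hF
    refine ⟨max ng ((Finset.range j).sup F), fun σ hσ => ⟨j, hij, ?_, ?_⟩⟩
    · exact hng σ (fun k hk => hσ k (lt_of_lt_of_le hk (le_max_left _ _)))
    · intro k h1 h2
      refine hFspec k h1 h2 σ (fun m hm => hσ m (lt_of_lt_of_le hm ?_))
      exact le_trans (Finset.le_sup (Finset.mem_range.mpr h2)) (le_max_right _ _)
  | release f g _ _ => exact absurd h not_false

/-- Every Release-free LTL formula in NNF is co-safe: each satisfying trace has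
a finite good prefix. -/
theorem releaseFree_coSafe {P : Type} (φ : LTL P) (h : ReleaseFree φ) : CoSafe φ := by
  intro ρ hρ
  obtain ⟨n, hn⟩ := releaseFree_finite_dep φ h ρ 0 hρ
  refine ⟨n, fun y => hn (ext (prefList ρ n) y) (fun k hk => ?_)⟩
  have hlen : (prefList ρ n).length = n := by simp [prefList]
  simp only [ext, hlen, hk, dif_pos]
  simp [prefList]
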